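/- arXiv:1403.3181 — 2 statements merged into one kernel-verified Lean document; each statement's English description precedes it below -/
import Mathlib

section
/- Let ω be a control function on a subinterval [a,b] ⊆ [0,1] and α > 0. Define the greedy partition a = σ_0 < σ_1 < ⋯ < σ_K = b by σ_{j+1} = min(inf{t ∈ (σ_j, b] : ω(σ_j, t) ≥ α}, b). Then ω(σ_{j-1}, σ_j) ≥ α for 1 ≤ j ≤ K-1, and hence K - 1 ≤ ω(a,b)/α. -/
open scoped Classical

/-- A control function on the simplex `{(s,t) : a ≤ s ≤ t ≤ b}`. -/
def IsControlOn (a b : ℝ) (ω : ℝ → ℝ → ℝ) : Prop :=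
  ContinuousOn (fun p : ℝ × ℝ => ω p.1 p.2) {p : ℝ × ℝ | a ≤ p.1 ∧ p.1 ≤ p.2 ∧ p.2 ≤ b} ∧
  (∀ s t, a ≤ s → s ≤ t → t ≤ b → 0 ≤ ω s t) ∧
  (∀ t, a ≤ t → t ≤ b → ω t t = 0) ∧
  (∀ s u t, a ≤ s → s ≤ u → u ≤ t → t ≤ b → ω s u + ω u t ≤ ω s t)

theorem greedy_partition_bound (a b : ℝ) (hab : 0 ≤ a) (hab' : a ≤ b) (hb : b ≤ 1)
    (ω : ℝ → ℝ → ℝ) (hω : IsControlOn a b ω) (α : ℝ) (hα : 0 < α)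
    (σ : ℕ → ℝ) (hσ0 : σ 0 = a)
    (hσ : ∀ j, σ (j + 1) =
      if {t : ℝ | σ j < t ∧ t ≤ b ∧ α ≤ ω (σ j) t}.Nonempty
      then min (sInf {t : ℝ | σ j < t ∧ t ≤ b ∧ α ≤ ω (σ j) t}) b else b)
    (K : ℕ) (hK : σ K = b) (hKmin : ∀ j < K, σ j < b) :
    (∀ j, 1 ≤ j → j ≤ K - 1 → α ≤ ω (σ (j - 1)) (σ j)) ∧
      ((K : ℝ) - 1 ≤ ω a b / α) := by
  obtain ⟨hcont, hnn, hdiag, hsup⟩ := hω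
  have hstep : ∀ j, σ j ≤ b → σ j ≤ σ (j + 1) ∧ σ (j + 1) ≤ b := by
    intro j hj
    rw [hσ j]
    split_ifs with h
    · refine ⟨le_min (le_csInf h ?_) hj, min_le_right _ _⟩
      intro t ht; exact ht.1.le
    · exact ⟨hj, le_refl b⟩
  have haj : ∀ j, j ≤ K → a ≤ σ j := by
    intro j
    induction j with
    | zero => intro _; rw [hσ0]
    | succ n ih =>
      intro hn
      have hnK : n < K := Nat.lt_of_succ_le hn
      exact le_trans (ih hnK.le) (hstep n (hKmin n hnK).le).1
  have hjb : ∀ j, j ≤ K → σ j ≤ b := by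
    intro j hj
    rcases lt_or_eq_of_le hj with h | h
    · exact (hKmin j h).le
    · rw [h, hK]
  have claim1 : ∀ j, 1 ≤ j → j ≤ K - 1 → α ≤ ω (σ (j - 1)) (σ j) := by
    intro j hj1 hjK
    have hjltK : j < K := by omega
    set i := j - 1 with hi
    have hji : j = i + 1 := by omega
    have hsb : σ j < b := hKmin j hjltK
    have hiK : i < K := by omega
    have hsa : a ≤ σ i := haj i hiK.le
    have hsib : σ i ≤ b := (hKmin i hiK).le
    have hrec := hσ i
    rw [← hji] at hrec
    by_cases hne : {t : ℝ | σ i < t ∧ t ≤ b ∧ α ≤ ω (σ i) t}.Nonempty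
    · rw [if_pos hne] at hrec
      set S := {t : ℝ | σ i < t ∧ t ≤ b ∧ α ≤ ω (σ i) t} with hS
      have hσj : σ j = sInf S := by
        rcases le_or_gt (sInf S) b with h1 | h1
        · rw [hrec, min_eq_left h1]
        · rw [hrec, min_eq_right h1.le] at hsb ⊢
          exact absurd hsb (lt_irrefl b)
      have hbdd : BddBelow S := ⟨σ i, fun t ht => ht.1.le⟩
      have hcl : sInf S ∈ closure S := csInf_mem_closure hne hbdd
      have hfc : ContinuousOn (fun t => ω (σ i) t) (Set.Icc (σ i) b) := by
        have hc2 : ContinuousOn (fun t : ℝ => ((σ i, t) : ℝ × ℝ)) (Set.Icc (σ i) b) :=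
          (continuous_const.prodMk continuous_id).continuousOn
        exact hcont.comp hc2 (fun t ht => ⟨hsa, ht.1, ht.2⟩)
      have hCclosed : IsClosed (Set.Icc (σ i) b ∩ (fun t => ω (σ i) t) ⁻¹' Set.Ici α) :=
        hfc.preimage_isClosed_of_isClosed isClosed_Icc isClosed_Ici
      have hsub : S ⊆ Set.Icc (σ i) b ∩ (fun t => ω (σ i) t) ⁻¹' Set.Ici α :=
        fun t ht => ⟨⟨ht.1.le, ht.2.1⟩, ht.2.2⟩
      have hmem : sInf S ∈ Set.Icc (σ i) b ∩ (fun t => ω (σ i) t) ⁻¹' Set.Ici α :=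
        hCclosed.closure_subset_iff.mpr hsub hcl
      rw [hσj]
      exact hmem.2
    · rw [if_neg hne] at hrec
      exact absurd hrec (ne_of_lt hsb)
  refine ⟨claim1, ?_⟩
  have sumle : ∀ n, n ≤ K → (∑ j ∈ Finset.range n, ω (σ j) (σ (j + 1))) ≤ ω a (σ n) := by
    intro n
    induction n with
    | zero => intro _; simp [hσ0, hdiag a le_rfl hab']
    | succ n ih =>
      intro hn
      rw [Finset.sum_range_succ]
      have h1 := ih (by omega)
      have h2 := hsup a (σ n) (σ (n + 1)) le_rfl (haj n (by omega))
        (hstep n (hjb n (by omega))).1 (hjb (n + 1) hn)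
      linarith
  rcases Nat.eq_zero_or_pos K with hK0 | hKpos
  · have h0 : (0:ℝ) ≤ ω a b := hnn a b le_rfl hab' le_rfl
    have h1 : (0:ℝ) ≤ ω a b / α := div_nonneg h0 hα.le
    rw [hK0]
    push_cast
    linarith
  · have hsum := sumle (K - 1) (by omega)
    have hterm : ∀ j ∈ Finset.range (K - 1), α ≤ ω (σ j) (σ (j + 1)) := by
      intro j hj
      rw [Finset.mem_range] at hj
      have := claim1 (j + 1) (by omega) (by omega)
      simpa using this
    have hcard : ((K - 1 : ℕ) : ℝ) * α ≤ ∑ j ∈ Finset.range (K - 1), ω (σ j) (σ (j + 1)) := by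
      calc ((K - 1 : ℕ) : ℝ) * α = ∑ _j ∈ Finset.range (K - 1), α := by
            simp [Finset.sum_const, mul_comm]
        _ ≤ _ := Finset.sum_le_sum hterm
    have hωb : ω a (σ (K - 1)) ≤ ω a b := by
      have h2 := hsup a (σ (K - 1)) b le_rfl (haj _ (by omega)) (hjb _ (by omega)) le_rfl
      have h3 := hnn (σ (K - 1)) b (haj _ (by omega)) (hjb _ (by omega)) le_rfl
      linarith
    have hfin : ((K - 1 : ℕ) : ℝ) * α ≤ ω a b := by linarith
    have hcast : ((K : ℝ) - 1) = ((K - 1 : ℕ) : ℝ) := by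
      rw [Nat.cast_sub hKpos]; simp
    rw [hcast, le_div_iff₀ hα]
    exact hfin
end

section
/- Let M : [0,1] → GL(n,ℝ) be continuous with M(0) = Id, of finite q-variation together with M^{-1}, and let Z : [0,1] → ℝ^n be of finite p-variation with Z(0) = 0 and 1/p + 1/q > 1. Then M(t)·∫_0^t M(s)^{-1} dZ(s) = Z(t) − M(t)·∫_0^t (dM(s)^{-1})·Z(s), where all integrals are Young integrals. -/
open Finset

/-- The set of partition sums defining the `p`-variation seminorm of `x` on `[s,t]`. -/
noncomputable def variationSet {E : Type*} [NormedAddCommGroup E]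
    (p : ℝ) (x : ℝ → E) (s t : ℝ) : Set ℝ :=
  {v | ∃ (n : ℕ) (u : Fin (n + 1) → ℝ), Monotone u ∧ u 0 = s ∧ u (Fin.last n) = t ∧
    v = (∑ i : Fin n, ‖x (u i.succ) - x (u i.castSucc)‖ ^ p) ^ (1 / p)}

/-- `I` is the limit, as the mesh of partitions of `[0,t]` tends to `0`, of the
Riemann–Stieltjes sums `S u` (the Young integral). -/
def IsRSLimit {n : ℕ}
    (S : ∀ {m : ℕ}, (Fin (m + 1) → ℝ) → (Fin n → ℝ)) (t : ℝ) (I : Fin n → ℝ) : Prop :=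
  ∀ ε > (0 : ℝ), ∃ δ > (0 : ℝ), ∀ (m : ℕ) (u : Fin (m + 1) → ℝ),
    Monotone u → u 0 = 0 → u (Fin.last m) = t →
    (∀ i : Fin m, u i.succ - u i.castSucc < δ) → ‖S u - I‖ < ε

lemma aux_norm_mulVec_le {n : ℕ} (A : Matrix (Fin n) (Fin n) ℝ) (v : Fin n → ℝ)
    (C : ℝ) (hC0 : 0 ≤ C) (hC : ∀ i j, |A i j| ≤ C) :
    ‖A.mulVec v‖ ≤ n * C * ‖v‖ := by
  have hnn : 0 ≤ (n : ℝ) * C * ‖v‖ := by positivity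
  rw [pi_norm_le_iff_of_nonneg hnn]
  intro i
  rw [Real.norm_eq_abs]
  calc |A.mulVec v i| = |∑ j, A i j * v j| := by simp [Matrix.mulVec, dotProduct]
    _ ≤ ∑ j, |A i j * v j| := Finset.abs_sum_le_sum_abs _ _
    _ ≤ ∑ _j : Fin n, C * ‖v‖ := by
        refine Finset.sum_le_sum fun j _ => ?_
        rw [abs_mul]
        exact mul_le_mul (hC i j) (by simpa [Real.norm_eq_abs] using norm_le_pi_norm v j)
          (abs_nonneg _) hC0
    _ = n * C * ‖v‖ := by simp [mul_assoc]

lemma aux_telescope {E : Type*} [AddCommGroup E] : ∀ {m : ℕ} (f : Fin (m + 1) → E),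
    ∑ i : Fin m, (f i.succ - f i.castSucc) = f (Fin.last m) - f 0 := by
  intro m
  induction m with
  | zero => intro f; simp [Fin.last]
  | succ k ih =>
    intro f
    rw [Fin.sum_univ_castSucc]
    have := ih (fun i => f i.castSucc)
    simp only [Fin.succ_castSucc] at this ⊢
    rw [this]
    simp only [Fin.succ_last, Fin.castSucc_zero]
    abel

lemma aux_partition (t δ : ℝ) (ht : 0 ≤ t) (hδ : 0 < δ) :
    ∃ (m : ℕ) (u : Fin (m + 1) → ℝ), Monotone u ∧ u 0 = 0 ∧ u (Fin.last m) = t ∧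
      ∀ i : Fin m, u i.succ - u i.castSucc < δ := by
  obtain ⟨m, hm⟩ := exists_nat_gt (t / δ)
  have hm1 : (0 : ℝ) < m + 1 := by positivity
  refine ⟨m + 1, fun i => t * i / (m + 1), ?_, by simp, ?_, ?_⟩
  · intro i j hij
    have : (i : ℝ) ≤ (j : ℝ) := by exact_mod_cast hij
    show t * (i : ℝ) / (m + 1) ≤ t * (j : ℝ) / (m + 1)
    gcongr
  · simp [Fin.val_last]
    field_simp
  · intro i
    have hv : ((i.succ : Fin (m + 2)) : ℝ) = (i : ℝ) + 1 := by
      simp [Fin.val_succ]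
    have hc : ((i.castSucc : Fin (m + 2)) : ℝ) = (i : ℝ) := by simp
    simp only []
    rw [hv, hc]
    have heq : t * ((i : ℝ) + 1) / (m + 1) - t * (i : ℝ) / (m + 1) = t / (m + 1) := by
      field_simp; ring
    rw [heq, div_lt_iff₀ hm1]
    have := (div_lt_iff₀ hδ).mp hm
    nlinarith

lemma aux_unique {n : ℕ} {S : ∀ {m : ℕ}, (Fin (m + 1) → ℝ) → (Fin n → ℝ)} {t : ℝ}
    (ht : 0 ≤ t) {I I' : Fin n → ℝ}
    (h : IsRSLimit S t I) (h' : IsRSLimit S t I') : I = I' := by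
  by_contra hne
  have hpos : 0 < ‖I - I'‖ := by
    rw [norm_pos_iff]
    exact sub_ne_zero_of_ne hne
  obtain ⟨δ, hδ, H⟩ := h (‖I - I'‖ / 2) (by positivity)
  obtain ⟨δ', hδ', H'⟩ := h' (‖I - I'‖ / 2) (by positivity)
  obtain ⟨m, u, hu1, hu2, hu3, hu4⟩ := aux_partition t (min δ δ') ht (lt_min hδ hδ')
  have k1 := H m u hu1 hu2 hu3 (fun i => (hu4 i).trans_le (min_le_left _ _))
  have k2 := H' m u hu1 hu2 hu3 (fun i => (hu4 i).trans_le (min_le_right _ _))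
  have : ‖I - I'‖ ≤ ‖S u - I'‖ + ‖S u - I‖ := by
    have := norm_sub_le (S u - I') (S u - I)
    simpa [sub_sub_sub_cancel_left] using this
  linarith

lemma aux_add {n : ℕ} {S S' : ∀ {m : ℕ}, (Fin (m + 1) → ℝ) → (Fin n → ℝ)} {t : ℝ}
    {I I' : Fin n → ℝ} (h : IsRSLimit S t I) (h' : IsRSLimit S' t I') :
    IsRSLimit (fun {m} u => S u + S' u) t (I + I') := by
  intro ε hε
  obtain ⟨δ, hδ, H⟩ := h (ε / 2) (by positivity)
  obtain ⟨δ', hδ', H'⟩ := h' (ε / 2) (by positivity)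
  refine ⟨min δ δ', lt_min hδ hδ', fun m u h1 h2 h3 h4 => ?_⟩
  have k1 := H m u h1 h2 h3 (fun i => (h4 i).trans_le (min_le_left _ _))
  have k2 := H' m u h1 h2 h3 (fun i => (h4 i).trans_le (min_le_right _ _))
  have : S u + S' u - (I + I') = (S u - I) + (S' u - I') := by abel
  rw [this]
  calc ‖(S u - I) + (S' u - I')‖ ≤ ‖S u - I‖ + ‖S' u - I'‖ := norm_add_le _ _
    _ < ε := by linarith

lemma aux_var_bound {E : Type*} [NormedAddCommGroup E] {p : ℝ} (hp : 0 < p) {x : ℝ → E}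
    {s t V : ℝ} (hV : ∀ v ∈ variationSet p x s t, v ≤ V) {m : ℕ} {u : Fin (m + 1) → ℝ}
    (hu1 : Monotone u) (hu2 : u 0 = s) (hu3 : u (Fin.last m) = t) :
    ∑ i : Fin m, ‖x (u i.succ) - x (u i.castSucc)‖ ^ p ≤ V ^ p := by
  have hs0 : 0 ≤ ∑ i : Fin m, ‖x (u i.succ) - x (u i.castSucc)‖ ^ p :=
    Finset.sum_nonneg fun i _ => Real.rpow_nonneg (norm_nonneg _) _
  have hmem : (∑ i : Fin m, ‖x (u i.succ) - x (u i.castSucc)‖ ^ p) ^ (1 / p)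
      ∈ variationSet p x s t := ⟨m, u, hu1, hu2, hu3, rfl⟩
  have h1 := hV _ hmem
  have h2 := Real.rpow_le_rpow (Real.rpow_nonneg hs0 _) h1 hp.le
  rwa [← Real.rpow_mul hs0, one_div, inv_mul_cancel₀ hp.ne', Real.rpow_one] at h2

lemma aux_var_nonneg {E : Type*} [NormedAddCommGroup E] {p : ℝ} {x : ℝ → E}
    {s t V : ℝ} (hst : s ≤ t) (hV : ∀ v ∈ variationSet p x s t, v ≤ V) : 0 ≤ V := by
  have hmem : (∑ i : Fin 1, ‖x ((![s, t]) i.succ) - x ((![s, t]) i.castSucc)‖ ^ p) ^ (1 / p)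
      ∈ variationSet p x s t := by
    refine ⟨1, ![s, t], ?_, rfl, rfl, rfl⟩
    intro i j hij
    fin_cases i <;> fin_cases j <;> simp_all <;> first | rfl | exact hst | omega
  exact le_trans (Real.rpow_nonneg (Finset.sum_nonneg fun i _ =>
    Real.rpow_nonneg (norm_nonneg _) _) _) (hV _ hmem)

lemma aux_pow_split {a η c e : ℝ} (ha0 : 0 ≤ a) (haη : a ≤ η) (hce : c < e) (hc : 0 < c) :
    a ^ e ≤ η ^ (e - c) * a ^ c := by
  have h1 : a ^ e = a ^ (e - c) * a ^ c := by
    rw [← Real.rpow_add' ha0 (by linarith)]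
    ring_nf
  rw [h1]
  exact mul_le_mul_of_nonneg_right
    (Real.rpow_le_rpow ha0 haη (by linarith)) (Real.rpow_nonneg ha0 _)

lemma aux_core {m : ℕ} (a b : Fin m → ℝ) {p q α β η VZ lam SA SB : ℝ}
    (hq0 : 0 < q) (hp0 : 0 < p)
    (hαβ : Real.HolderConjugate α β) (hαq : q < α) (hβp : p < β)
    (ha0 : ∀ i, 0 ≤ a i) (hb0 : ∀ i, 0 ≤ b i)
    (haη : ∀ i, a i ≤ η) (hbB : ∀ i, b i ≤ VZ)
    (hlam : 0 < lam) (hη : 0 ≤ η) (hVZ : 0 ≤ VZ)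
    (haq : ∑ i, a i ^ q ≤ SA) (hbp : ∑ i, b i ^ p ≤ SB) :
    ∑ i, a i * b i ≤ lam ^ α / α * (η ^ (α - q) * SA) + lam⁻¹ ^ β / β * (VZ ^ (β - p) * SB) := by
  have hα0 : 0 < α := hαβ.pos
  have hβ0 : 0 < β := hαβ.symm.pos
  calc ∑ i, a i * b i
      ≤ ∑ i, ((lam * a i) ^ α / α + (lam⁻¹ * b i) ^ β / β) := by
        refine Finset.sum_le_sum fun i _ => ?_
        have : a i * b i = (lam * a i) * (lam⁻¹ * b i) := by
          field_simp
        rw [this]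
        exact Real.young_inequality_of_nonneg
          (mul_nonneg hlam.le (ha0 i)) (mul_nonneg (by positivity) (hb0 i)) hαβ
    _ = (∑ i, (lam * a i) ^ α) / α + (∑ i, (lam⁻¹ * b i) ^ β) / β := by
        rw [Finset.sum_add_distrib, ← Finset.sum_div, ← Finset.sum_div]
    _ ≤ (lam ^ α * (η ^ (α - q) * SA)) / α + (lam⁻¹ ^ β * (VZ ^ (β - p) * SB)) / β := by
        have key1 : ∑ i, (lam * a i) ^ α ≤ lam ^ α * (η ^ (α - q) * SA) := by
          calc ∑ i, (lam * a i) ^ α = ∑ i, lam ^ α * a i ^ α := by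
                refine Finset.sum_congr rfl fun i _ => ?_
                exact Real.mul_rpow hlam.le (ha0 i)
            _ ≤ ∑ i, lam ^ α * (η ^ (α - q) * a i ^ q) := by
                refine Finset.sum_le_sum fun i _ => ?_
                exact mul_le_mul_of_nonneg_left
                  (aux_pow_split (ha0 i) (haη i) hαq hq0) (Real.rpow_nonneg hlam.le _)
            _ = lam ^ α * η ^ (α - q) * ∑ i, a i ^ q := by
                rw [Finset.mul_sum]
                refine Finset.sum_congr rfl fun i _ => ?_
                ring
            _ ≤ lam ^ α * (η ^ (α - q) * SA) := by
                rw [← mul_assoc]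
                exact mul_le_mul_of_nonneg_left haq (by positivity)
        have key2 : ∑ i, (lam⁻¹ * b i) ^ β ≤ lam⁻¹ ^ β * (VZ ^ (β - p) * SB) := by
          calc ∑ i, (lam⁻¹ * b i) ^ β = ∑ i, lam⁻¹ ^ β * b i ^ β := by
                refine Finset.sum_congr rfl fun i _ => ?_
                exact Real.mul_rpow (by positivity) (hb0 i)
            _ ≤ ∑ i, lam⁻¹ ^ β * (VZ ^ (β - p) * b i ^ p) := by
                refine Finset.sum_le_sum fun i _ => ?_
                exact mul_le_mul_of_nonneg_left
                  (aux_pow_split (hb0 i) (hbB i) hβp hp0) (Real.rpow_nonneg (by positivity) _)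
            _ = lam⁻¹ ^ β * VZ ^ (β - p) * ∑ i, b i ^ p := by
                rw [Finset.mul_sum]
                refine Finset.sum_congr rfl fun i _ => ?_
                ring
            _ ≤ lam⁻¹ ^ β * (VZ ^ (β - p) * SB) := by
                rw [← mul_assoc]
                exact mul_le_mul_of_nonneg_left hbp (by positivity)
        gcongr
    _ = lam ^ α / α * (η ^ (α - q) * SA) + lam⁻¹ ^ β / β * (VZ ^ (β - p) * SB) := by ring

lemma aux_exists_small (e C ε : ℝ) (he : 0 < e) (hε : 0 < ε) :
    ∃ μ > (0 : ℝ), μ ^ e * C < ε := by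
  have hcont : ContinuousAt (fun x : ℝ => x ^ e * C) 0 :=
    (Real.continuousAt_rpow_const 0 e (Or.inr he.le)).mul continuousAt_const
  have h0 : (0 : ℝ) ^ e * C = 0 := by rw [Real.zero_rpow he.ne']; ring
  have htend := hcont.tendsto
  rw [h0] at htend
  have hev := htend.eventually_lt_const hε
  rw [Metric.eventually_nhds_iff] at hev
  obtain ⟨r, hr, H⟩ := hev
  refine ⟨r / 2, by positivity, H ?_⟩
  rw [Real.dist_eq, sub_zero, abs_of_pos (by positivity)]
  linarith

lemma aux_cross {n : ℕ} {p q : ℝ} (hp : 1 ≤ p) (hq : 1 ≤ q) (hpq : 1 / p + 1 / q > 1)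
    (M : ℝ → Matrix (Fin n) (Fin n) ℝ) (Z : ℝ → Fin n → ℝ) {t : ℝ}
    (ht : t ∈ Set.Icc (0 : ℝ) 1)
    (hunif : ∀ η > (0 : ℝ), ∃ δ > (0 : ℝ), ∀ x ∈ Set.Icc (0 : ℝ) 1, ∀ y ∈ Set.Icc (0 : ℝ) 1,
      |x - y| < δ → ∀ i j : Fin n, |(M x)⁻¹ i j - (M y)⁻¹ i j| ≤ η)
    {VM VZ : ℝ} (hVM0 : 0 ≤ VM) (hVZ0 : 0 ≤ VZ)
    (hVM : ∀ v ∈ variationSet q (fun r (i j : Fin n) => (M r)⁻¹ i j) 0 t, v ≤ VM)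
    (hVZ : ∀ v ∈ variationSet p Z 0 t, v ≤ VZ) :
    IsRSLimit (fun {m} u => ∑ i : Fin m,
      ((M (u i.succ))⁻¹ - (M (u i.castSucc))⁻¹).mulVec (Z (u i.succ) - Z (u i.castSucc))) t 0 := by
  have hp0 : (0 : ℝ) < p := by linarith
  have hq0 : (0 : ℝ) < q := by linarith
  set s : ℝ := 1 / p + 1 / q with hs_def
  have hs1 : 1 < s := hpq
  have hs0 : (0 : ℝ) < s := by linarith
  have hconj : Real.HolderConjugate (q * s) (p * s) := by
    refine Real.holderConjugate_iff.mpr ⟨?_, ?_⟩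
    · nlinarith
    · rw [mul_inv, mul_inv]
      have hsum : q⁻¹ + p⁻¹ = s := by rw [hs_def, one_div, one_div]; ring
      calc q⁻¹ * s⁻¹ + p⁻¹ * s⁻¹ = (q⁻¹ + p⁻¹) * s⁻¹ := by ring
        _ = s * s⁻¹ := by rw [hsum]
        _ = 1 := mul_inv_cancel₀ hs0.ne'
  have hαq : q < q * s := by nlinarith
  have hβp : p < p * s := by nlinarith
  intro ε hε
  obtain ⟨μ, hμ0, hμ⟩ := aux_exists_small (p * s)
    ((n : ℝ) * (VZ ^ (p * s - p) * VZ ^ p) / (p * s)) (ε / 2) (by positivity) (by positivity)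
  obtain ⟨η, hη0, hηs⟩ := aux_exists_small (q * s - q)
    ((n : ℝ) * (μ⁻¹ ^ (q * s) / (q * s) * VM ^ q)) (ε / 2) (by nlinarith) (by positivity)
  obtain ⟨δ, hδ0, hδ⟩ := hunif η hη0
  refine ⟨δ, hδ0, fun m u h1 h2 h3 h4 => ?_⟩
  set N : ℝ → (Fin n → Fin n → ℝ) := fun r (i j : Fin n) => (M r)⁻¹ i j with hN
  set a : Fin m → ℝ := fun i => ‖N (u i.succ) - N (u i.castSucc)‖ with ha
  set b : Fin m → ℝ := fun i => ‖Z (u i.succ) - Z (u i.castSucc)‖ with hb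
  have hmem : ∀ k : Fin (m + 1), u k ∈ Set.Icc (0 : ℝ) 1 := fun k =>
    ⟨h2 ▸ h1 (Fin.zero_le k), (h1 (Fin.le_last k)).trans (h3 ▸ ht.2)⟩
  have hentry : ∀ (i : Fin m) (i' j : Fin n),
      |((M (u i.succ))⁻¹ - (M (u i.castSucc))⁻¹) i' j| ≤ a i := by
    intro i i' j
    have e1 : ((M (u i.succ))⁻¹ - (M (u i.castSucc))⁻¹) i' j
        = (N (u i.succ) - N (u i.castSucc)) i' j := rfl
    rw [e1, ← Real.norm_eq_abs]
    exact le_trans (norm_le_pi_norm ((N (u i.succ) - N (u i.castSucc)) i') j)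
      (norm_le_pi_norm (N (u i.succ) - N (u i.castSucc)) i')
  have haη : ∀ i, a i ≤ η := by
    intro i
    rw [ha]
    rw [pi_norm_le_iff_of_nonneg hη0.le]
    intro i'
    rw [pi_norm_le_iff_of_nonneg hη0.le]
    intro j
    rw [Real.norm_eq_abs]
    have habs : |u i.succ - u i.castSucc| < δ := by
      rw [abs_of_nonneg (sub_nonneg.2 (h1 (Fin.castSucc_lt_succ (i := i)).le))]
      exact h4 i
    exact hδ (u i.succ) (hmem _) (u i.castSucc) (hmem _) habs i' j
  have hsum_a : ∑ i, a i ^ q ≤ VM ^ q :=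
    aux_var_bound hq0 hVM h1 h2 h3
  have hsum_b : ∑ i, b i ^ p ≤ VZ ^ p :=
    aux_var_bound hp0 hVZ h1 h2 h3
  have hbB : ∀ i, b i ≤ VZ := by
    intro i
    have h5 : b i ^ p ≤ VZ ^ p :=
      le_trans (Finset.single_le_sum (f := fun j => b j ^ p)
        (fun j _ => Real.rpow_nonneg (norm_nonneg _) p) (Finset.mem_univ i)) hsum_b
    exact (Real.rpow_le_rpow_iff (norm_nonneg _) hVZ0 hp0).mp h5
  have hcore := aux_core a b (lam := μ⁻¹) hq0 hp0 hconj hαq hβp (fun i => norm_nonneg _)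
    (fun i => norm_nonneg _) haη hbB (by positivity) hη0.le hVZ0 hsum_a hsum_b
  have hchain : ‖(∑ i : Fin m,
      ((M (u i.succ))⁻¹ - (M (u i.castSucc))⁻¹).mulVec (Z (u i.succ) - Z (u i.castSucc)))
      - 0‖ ≤ (n : ℝ) * ∑ i, a i * b i := by
    rw [sub_zero]
    calc ‖∑ i : Fin m, ((M (u i.succ))⁻¹ - (M (u i.castSucc))⁻¹).mulVec
          (Z (u i.succ) - Z (u i.castSucc))‖
        ≤ ∑ i : Fin m, ‖((M (u i.succ))⁻¹ - (M (u i.castSucc))⁻¹).mulVec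
          (Z (u i.succ) - Z (u i.castSucc))‖ := norm_sum_le _ _
      _ ≤ ∑ i : Fin m, (n : ℝ) * a i * b i := by
          refine Finset.sum_le_sum fun i _ => ?_
          exact aux_norm_mulVec_le _ _ (a i) (norm_nonneg _) (hentry i)
      _ = (n : ℝ) * ∑ i, a i * b i := by
          rw [Finset.mul_sum]
          refine Finset.sum_congr rfl fun i _ => ?_
          ring
  have hfinal : (n : ℝ) * ∑ i, a i * b i < ε := by
    have e2 : (n : ℝ) * ((μ⁻¹) ^ (q * s) / (q * s) * (η ^ (q * s - q) * VM ^ q)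
        + (μ⁻¹)⁻¹ ^ (p * s) / (p * s) * (VZ ^ (p * s - p) * VZ ^ p))
        = η ^ (q * s - q) * ((n : ℝ) * (μ⁻¹ ^ (q * s) / (q * s) * VM ^ q))
        + μ ^ (p * s) * ((n : ℝ) * (VZ ^ (p * s - p) * VZ ^ p) / (p * s)) := by
      rw [inv_inv]; ring
    calc (n : ℝ) * ∑ i, a i * b i
        ≤ (n : ℝ) * ((μ⁻¹) ^ (q * s) / (q * s) * (η ^ (q * s - q) * VM ^ q)
          + (μ⁻¹)⁻¹ ^ (p * s) / (p * s) * (VZ ^ (p * s - p) * VZ ^ p)) := by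
          exact mul_le_mul_of_nonneg_left hcore (Nat.cast_nonneg n)
      _ < ε := by rw [e2]; linarith
  exact lt_of_le_of_lt hchain hfinal

/-- Variation-of-constants / integration-by-parts identity for Young integrals:
`M(t)·∫_0^t M(s)⁻¹ dZ(s) = Z(t) − M(t)·∫_0^t (dM(s)⁻¹)·Z(s)`. -/
theorem young_variation_of_constants (n : ℕ) (p q : ℝ) (hp : 1 ≤ p) (hq : 1 ≤ q)
    (hpq : 1 / p + 1 / q > 1)
    (M : ℝ → Matrix (Fin n) (Fin n) ℝ) (Z : ℝ → Fin n → ℝ)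
    (hMcont : ∀ i j, Continuous fun t => M t i j)
    (hM0 : M 0 = 1) (hZ0 : Z 0 = 0)
    (hMinv : ∀ t ∈ Set.Icc (0 : ℝ) 1, IsUnit (M t))
    (hMvar : ∀ s t : ℝ, 0 ≤ s → s ≤ t → t ≤ 1 →
      BddAbove (variationSet q (fun t (i j : Fin n) => M t i j) s t))
    (hMinvvar : ∀ s t : ℝ, 0 ≤ s → s ≤ t → t ≤ 1 →
      BddAbove (variationSet q (fun t (i j : Fin n) => (M t)⁻¹ i j) s t))
    (hZvar : ∀ s t : ℝ, 0 ≤ s → s ≤ t → t ≤ 1 → BddAbove (variationSet p Z s t))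
    (I₁ I₂ : ℝ → Fin n → ℝ)
    (hI₁ : ∀ t ∈ Set.Icc (0 : ℝ) 1,
      IsRSLimit (fun {m} u => ∑ i : Fin m,
        (M (u i.castSucc))⁻¹.mulVec (Z (u i.succ) - Z (u i.castSucc))) t (I₁ t))
    (hI₂ : ∀ t ∈ Set.Icc (0 : ℝ) 1,
      IsRSLimit (fun {m} u => ∑ i : Fin m,
        ((M (u i.succ))⁻¹ - (M (u i.castSucc))⁻¹).mulVec (Z (u i.castSucc))) t (I₂ t)) :
    ∀ t ∈ Set.Icc (0 : ℝ) 1,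
      (M t).mulVec (I₁ t) = Z t - (M t).mulVec (I₂ t) := by
  -- continuity of the inverse, entrywise, on `[0,1]`
  have hMc : Continuous M := continuous_matrix hMcont
  have hdet : Continuous fun r => (M r).det := hMc.matrix_det
  have hadj : Continuous fun r => (M r).adjugate := hMc.matrix_adjugate
  have hdetinv : ContinuousOn (fun r => ((M r).det)⁻¹) (Set.Icc (0 : ℝ) 1) :=
    ContinuousOn.inv₀ hdet.continuousOn fun r hr =>
      ((Matrix.isUnit_iff_isUnit_det _).mp (hMinv r hr)).ne_zero
  have hNentry : ∀ i j : Fin n, ContinuousOn (fun r => (M r)⁻¹ i j) (Set.Icc (0 : ℝ) 1) := by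
    intro i j
    have heq : ∀ r : ℝ, (M r)⁻¹ i j = ((M r).det)⁻¹ * (M r).adjugate i j := by
      intro r
      rw [Matrix.inv_def, Ring.inverse_eq_inv, Matrix.smul_apply, smul_eq_mul]
    simp only [heq]
    exact hdetinv.mul (hadj.matrix_elem i j).continuousOn
  have hNcont : ContinuousOn (fun r => (fun (i j : Fin n) => (M r)⁻¹ i j))
      (Set.Icc (0 : ℝ) 1) :=
    continuousOn_pi.mpr fun i => continuousOn_pi.mpr fun j => hNentry i j
  have hucont := (isCompact_Icc : IsCompact (Set.Icc (0 : ℝ) 1)).uniformContinuousOn_of_continuous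
    hNcont
  rw [Metric.uniformContinuousOn_iff] at hucont
  have hunif : ∀ η > (0 : ℝ), ∃ δ > (0 : ℝ), ∀ x ∈ Set.Icc (0 : ℝ) 1, ∀ y ∈ Set.Icc (0 : ℝ) 1,
      |x - y| < δ → ∀ i j : Fin n, |(M x)⁻¹ i j - (M y)⁻¹ i j| ≤ η := by
    intro η hη
    obtain ⟨δ, hδ0, H⟩ := hucont η hη
    refine ⟨δ, hδ0, fun x hx y hy hxy i j => ?_⟩
    have h1 := H x hx y hy (by rwa [Real.dist_eq])
    have h2 : dist ((M x)⁻¹ i j) ((M y)⁻¹ i j)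
        ≤ dist (fun (i j : Fin n) => (M x)⁻¹ i j) (fun (i j : Fin n) => (M y)⁻¹ i j) :=
      le_trans (dist_le_pi_dist (fun j => (M x)⁻¹ i j) (fun j => (M y)⁻¹ i j) j)
        (dist_le_pi_dist (fun (i j : Fin n) => (M x)⁻¹ i j) (fun (i j : Fin n) => (M y)⁻¹ i j) i)
    rw [Real.dist_eq] at h2
    linarith
  intro t ht
  -- variation bounds
  obtain ⟨VM, hVM⟩ := hMinvvar 0 t le_rfl ht.1 ht.2
  obtain ⟨VZ, hVZ⟩ := hZvar 0 t le_rfl ht.1 ht.2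
  have hVM0 : 0 ≤ VM := aux_var_nonneg ht.1 hVM
  have hVZ0 : 0 ≤ VZ := aux_var_nonneg ht.1 hVZ
  have hcross := aux_cross hp hq hpq M Z ht hunif hVM0 hVZ0 hVM hVZ
  -- the RS sums of `S₁ + S₂` converge to `(M t)⁻¹ *ᵥ Z t`
  have hkey : IsRSLimit (fun {m} u =>
      (∑ i : Fin m, (M (u i.castSucc))⁻¹.mulVec (Z (u i.succ) - Z (u i.castSucc)))
      + ∑ i : Fin m, ((M (u i.succ))⁻¹ - (M (u i.castSucc))⁻¹).mulVec (Z (u i.castSucc)))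
      t ((M t)⁻¹.mulVec (Z t)) := by
    intro ε hε
    obtain ⟨δ, hδ0, H⟩ := hcross ε hε
    refine ⟨δ, hδ0, fun m u h1 h2 h3 h4 => ?_⟩
    have hsum : (∑ i : Fin m, (M (u i.castSucc))⁻¹.mulVec (Z (u i.succ) - Z (u i.castSucc)))
        + (∑ i : Fin m, ((M (u i.succ))⁻¹ - (M (u i.castSucc))⁻¹).mulVec (Z (u i.castSucc)))
        + (∑ i : Fin m, ((M (u i.succ))⁻¹ - (M (u i.castSucc))⁻¹).mulVec
            (Z (u i.succ) - Z (u i.castSucc)))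
        = (M t)⁻¹.mulVec (Z t) := by
      rw [← Finset.sum_add_distrib, ← Finset.sum_add_distrib]
      have hterm : ∀ i : Fin m,
          (M (u i.castSucc))⁻¹.mulVec (Z (u i.succ) - Z (u i.castSucc))
          + ((M (u i.succ))⁻¹ - (M (u i.castSucc))⁻¹).mulVec (Z (u i.castSucc))
          + ((M (u i.succ))⁻¹ - (M (u i.castSucc))⁻¹).mulVec (Z (u i.succ) - Z (u i.castSucc))
          = (M (u i.succ))⁻¹.mulVec (Z (u i.succ))
            - (M (u i.castSucc))⁻¹.mulVec (Z (u i.castSucc)) := by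
        intro i
        simp only [Matrix.mulVec_sub, Matrix.sub_mulVec]
        abel
      rw [Finset.sum_congr rfl fun i _ => hterm i,
        aux_telescope (fun k => (M (u k))⁻¹.mulVec (Z (u k))), h3, h2, hZ0,
        Matrix.mulVec_zero, sub_zero]
    have hre : (∑ i : Fin m, (M (u i.castSucc))⁻¹.mulVec (Z (u i.succ) - Z (u i.castSucc)))
        + (∑ i : Fin m, ((M (u i.succ))⁻¹ - (M (u i.castSucc))⁻¹).mulVec (Z (u i.castSucc)))
        - (M t)⁻¹.mulVec (Z t)
        = -((∑ i : Fin m, ((M (u i.succ))⁻¹ - (M (u i.castSucc))⁻¹).mulVec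
            (Z (u i.succ) - Z (u i.castSucc))) - 0) := by
      rw [sub_zero, ← hsum]
      abel
    calc ‖(∑ i : Fin m, (M (u i.castSucc))⁻¹.mulVec (Z (u i.succ) - Z (u i.castSucc)))
        + (∑ i : Fin m, ((M (u i.succ))⁻¹ - (M (u i.castSucc))⁻¹).mulVec (Z (u i.castSucc)))
        - (M t)⁻¹.mulVec (Z t)‖
        = ‖(∑ i : Fin m, ((M (u i.succ))⁻¹ - (M (u i.castSucc))⁻¹).mulVec
            (Z (u i.succ) - Z (u i.castSucc))) - 0‖ := by rw [hre, norm_neg]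
      _ < ε := H m u h1 h2 h3 h4
  have hadd := aux_add (hI₁ t ht) (hI₂ t ht)
  have heq : I₁ t + I₂ t = (M t)⁻¹.mulVec (Z t) := aux_unique ht.1 hadd hkey
  have hMt : M t * (M t)⁻¹ = 1 :=
    Matrix.mul_nonsing_inv _ ((Matrix.isUnit_iff_isUnit_det _).mp (hMinv t ht))
  have hfin : (M t).mulVec (I₁ t) + (M t).mulVec (I₂ t) = Z t := by
    rw [← Matrix.mulVec_add, heq, Matrix.mulVec_mulVec, hMt, Matrix.one_mulVec]
  rw [← hfin]
  abel
end
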